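/- arXiv:2108.01756 — 7 statements merged into one kernel-verified Lean document; each statement's English description precedes it below -/
import Mathlib

section
/- The collection of central idempotents of a symmetric monoidal category, with order u ≤ v iff u factors through v (u = v ∘ m for some m : U → V), forms a meet-semilattice: the identity id_I is the top element, and the meet of u : U → I and v : V → I is λ_I ∘ (u ⊗ v) : U ⊗ V → I. -/
open CategoryTheory MonoidalCategory

variable (C : Type*) [Category C] [MonoidalCategory C]

/-- A central idempotent in a monoidal category, bundled. -/
structure CentralIdempotent where
  U : C
  u : U ⟶ 𝟙_ C
  comm : U ◁ u ≫ (ρ_ U).hom = u ▷ U ≫ (λ_ U).hom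
  iso : IsIso (U ◁ u ≫ (ρ_ U).hom)

variable {C}

/-- Identification of central idempotents: `u ∼ v` iff there is an isomorphism
`m : U ≅ V` with `u = v ∘ m`. -/
def ciSetoid : Setoid (CentralIdempotent C) where
  r a b := ∃ m : a.U ≅ b.U, a.u = m.hom ≫ b.u
  iseqv := by
    constructor
    · exact fun a => ⟨Iso.refl _, by simp⟩
    · rintro a b ⟨m, h⟩
      exact ⟨m.symm, by rw [h]; simp⟩
    · rintro a b c ⟨m, h⟩ ⟨n, h'⟩
      exact ⟨m ≪≫ n, by rw [h, h']; simp⟩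

/-- The factorization order on central idempotents: `u ≤ v` iff `u = v ∘ m` for some
`m : U ⟶ V`. -/
def ciLe (a b : CentralIdempotent C) : Prop := ∃ m : a.U ⟶ b.U, a.u = m ≫ b.u

/-!
Factorizations through a central idempotent `v : V ⟶ I` are unique: if `f ≫ v = u = g ≫ v` with
`u : U ⟶ I` central, then `(U ◁ u ≫ ρ_U) ≫ f = (f ⊗ g) ≫ (V ◁ v ≫ ρ_V)` and
`(u ▷ U ≫ λ_U) ≫ g = (f ⊗ g) ≫ (v ▷ V ≫ λ_V)`, which agree by centrality of `u` and `v`, and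
`U ◁ u ≫ ρ_U` is invertible. Hence mutual factorizations are inverse isomorphisms, and factorization
is a partial order up to isomorphism. In a braided category, for `w = λ_I ∘ (u ⊗ v)` the map
`(U ⊗ V) ◁ w ≫ ρ` is, up to the invertible `tensorμ`, the tensor product of the corresponding maps
for `u` and `v`, so `w` is again a central idempotent. It lies below `u` and `v` by naturality of
the unitors, and above every common lower bound `c` because `c` factors through `λ_I ∘ (c ⊗ c)`.
-/

section Monoidal

variable {X Y X' Y' : C}

theorem tensorHom_comp_whiskerLeft_comp_rightUnitor (f : X ⟶ Y) (g : X' ⟶ Y') (v : Y' ⟶ 𝟙_ C) :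
    (f ⊗ₘ g) ≫ Y ◁ v ≫ (ρ_ Y).hom = X ◁ (g ≫ v) ≫ (ρ_ X).hom ≫ f := by
  rw [MonoidalCategory.tensorHom_def, Category.assoc, ← MonoidalCategory.whiskerLeft_comp_assoc,
    ← whisker_exchange_assoc, rightUnitor_naturality]

theorem tensorHom_comp_whiskerRight_comp_leftUnitor (f : X ⟶ Y) (g : X' ⟶ Y') (v : Y ⟶ 𝟙_ C) :
    (f ⊗ₘ g) ≫ v ▷ Y' ≫ (λ_ Y').hom = (f ≫ v) ▷ X' ≫ (λ_ X').hom ≫ g := by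
  rw [tensorHom_def', Category.assoc, ← comp_whiskerRight_assoc, whisker_exchange_assoc,
    leftUnitor_naturality]

def meetHom (f : X ⟶ 𝟙_ C) (g : Y ⟶ 𝟙_ C) : X ⊗ Y ⟶ 𝟙_ C :=
  (f ⊗ₘ g) ≫ (λ_ (𝟙_ C)).hom

theorem meetHom_eq_whiskerLeft_comp (f : X ⟶ 𝟙_ C) (g : Y ⟶ 𝟙_ C) :
    meetHom f g = (X ◁ g ≫ (ρ_ X).hom) ≫ f := by
  rw [meetHom, tensorHom_def', Category.assoc, unitors_equal, rightUnitor_naturality,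
    Category.assoc]

theorem meetHom_eq_whiskerRight_comp (f : X ⟶ 𝟙_ C) (g : Y ⟶ 𝟙_ C) :
    meetHom f g = (f ▷ Y ≫ (λ_ Y).hom) ≫ g := by
  rw [meetHom, MonoidalCategory.tensorHom_def, Category.assoc, leftUnitor_naturality,
    Category.assoc]

theorem tensorHom_comp_meetHom (m : X' ⟶ X) (n : Y' ⟶ Y) (f : X ⟶ 𝟙_ C) (g : Y ⟶ 𝟙_ C) :
    (m ⊗ₘ n) ≫ meetHom f g = meetHom (m ≫ f) (n ≫ g) := by
  rw [meetHom, meetHom, tensorHom_comp_tensorHom_assoc]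

end Monoidal

section Braided

variable [BraidedCategory C]

instance isIso_tensorμ (X₁ X₂ Y₁ Y₂ : C) : IsIso (tensorμ X₁ X₂ Y₁ Y₂) :=
  ⟨tensorδ X₁ X₂ Y₁ Y₂, tensorμ_tensorδ _ _ _ _, tensorδ_tensorμ _ _ _ _⟩

variable {X Y : C}

theorem whiskerLeft_meetHom_comp_rightUnitor (f : X ⟶ 𝟙_ C) (g : Y ⟶ 𝟙_ C) :
    (X ⊗ Y) ◁ meetHom f g ≫ (ρ_ (X ⊗ Y)).hom =
      tensorμ X Y X Y ≫ ((X ◁ f ≫ (ρ_ X).hom) ⊗ₘ (Y ◁ g ≫ (ρ_ Y).hom)) := by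
  rw [meetHom, MonoidalCategory.whiskerLeft_comp, Category.assoc, tensor_right_unitality,
    whiskerLeft_hom_inv_assoc, ← Category.assoc, tensorμ_natural_right, Category.assoc,
    tensorHom_comp_tensorHom]

theorem meetHom_whiskerRight_comp_leftUnitor (f : X ⟶ 𝟙_ C) (g : Y ⟶ 𝟙_ C) :
    meetHom f g ▷ (X ⊗ Y) ≫ (λ_ (X ⊗ Y)).hom =
      tensorμ X Y X Y ≫ ((f ▷ X ≫ (λ_ X).hom) ⊗ₘ (g ▷ Y ≫ (λ_ Y).hom)) := by
  rw [meetHom, comp_whiskerRight, Category.assoc, tensor_left_unitality,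
    hom_inv_whiskerRight_assoc, ← Category.assoc, tensorμ_natural_left, Category.assoc,
    tensorHom_comp_tensorHom]

end Braided

namespace CentralIdempotent

theorem factorization_unique (a b : CentralIdempotent C) {f g : a.U ⟶ b.U}
    (hf : f ≫ b.u = a.u) (hg : g ≫ b.u = a.u) : f = g := by
  have := a.iso
  refine (cancel_epi (a.U ◁ a.u ≫ (ρ_ a.U).hom)).mp ?_
  calc (a.U ◁ a.u ≫ (ρ_ a.U).hom) ≫ f
      = (f ⊗ₘ g) ≫ b.U ◁ b.u ≫ (ρ_ b.U).hom := by
        rw [tensorHom_comp_whiskerLeft_comp_rightUnitor, hg, Category.assoc]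
    _ = (f ⊗ₘ g) ≫ b.u ▷ b.U ≫ (λ_ b.U).hom := by rw [b.comm]
    _ = (a.U ◁ a.u ≫ (ρ_ a.U).hom) ≫ g := by
        rw [tensorHom_comp_whiskerRight_comp_leftUnitor, hf, a.comm, Category.assoc]

theorem ciLe_refl (a : CentralIdempotent C) : ciLe a a :=
  ⟨𝟙 _, (Category.id_comp _).symm⟩

theorem ciLe_trans {a b c : CentralIdempotent C} : ciLe a b → ciLe b c → ciLe a c
  | ⟨m, hm⟩, ⟨n, hn⟩ => ⟨m ≫ n, by rw [hm, hn, Category.assoc]⟩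

theorem ciLe_of_rel {a b : CentralIdempotent C} : ciSetoid.r a b → ciLe a b
  | ⟨m, hm⟩ => ⟨m.hom, hm⟩

theorem ciLe_congr {a a' b b' : CentralIdempotent C} (ha : ciSetoid.r a a')
    (hb : ciSetoid.r b b') : ciLe a b ↔ ciLe a' b' :=
  ⟨fun h => ciLe_trans (ciLe_trans (ciLe_of_rel (ciSetoid.symm ha)) h) (ciLe_of_rel hb),
    fun h => ciLe_trans (ciLe_trans (ciLe_of_rel ha) h) (ciLe_of_rel (ciSetoid.symm hb))⟩

theorem ciLe_antisymm {a b : CentralIdempotent C} : ciLe a b → ciLe b a → ciSetoid.r a b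
  | ⟨m, hm⟩, ⟨n, hn⟩ =>
    ⟨⟨m, n, factorization_unique a a (by rw [Category.assoc, ← hn, ← hm]) (Category.id_comp _),
      factorization_unique b b (by rw [Category.assoc, ← hm, ← hn]) (Category.id_comp _)⟩, hm⟩

def unit : CentralIdempotent C where
  U := 𝟙_ C
  u := 𝟙 (𝟙_ C)
  comm := by simp [unitors_equal]
  iso := by simp only [MonoidalCategory.whiskerLeft_id, Category.id_comp]; infer_instance

theorem ciLe_unit (a : CentralIdempotent C) : ciLe a unit :=
  ⟨a.u, (Category.comp_id _).symm⟩

section Braided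

variable [BraidedCategory C]

def inf (a b : CentralIdempotent C) : CentralIdempotent C where
  U := a.U ⊗ b.U
  u := meetHom a.u b.u
  comm := by
    rw [whiskerLeft_meetHom_comp_rightUnitor, meetHom_whiskerRight_comp_leftUnitor, a.comm, b.comm]
  iso := by
    have := a.iso
    have := b.iso
    rw [whiskerLeft_meetHom_comp_rightUnitor]
    infer_instance

theorem inf_ciLe_left (a b : CentralIdempotent C) : ciLe (a.inf b) a :=
  ⟨a.U ◁ b.u ≫ (ρ_ a.U).hom, meetHom_eq_whiskerLeft_comp a.u b.u⟩

theorem inf_ciLe_right (a b : CentralIdempotent C) : ciLe (a.inf b) b :=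
  ⟨a.u ▷ b.U ≫ (λ_ b.U).hom, meetHom_eq_whiskerRight_comp a.u b.u⟩

theorem ciLe_inf {a b c : CentralIdempotent C} : ciLe c a → ciLe c b → ciLe c (a.inf b)
  | ⟨m, hm⟩, ⟨n, hn⟩ => by
    have := c.iso
    refine ⟨inv (c.U ◁ c.u ≫ (ρ_ c.U).hom) ≫ (m ⊗ₘ n), ?_⟩
    change c.u = (inv (c.U ◁ c.u ≫ (ρ_ c.U).hom) ≫ (m ⊗ₘ n)) ≫ meetHom a.u b.u
    rw [Category.assoc, tensorHom_comp_meetHom, ← hm, ← hn, meetHom_eq_whiskerLeft_comp,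
      IsIso.inv_hom_id_assoc]

theorem inf_congr {a a' b b' : CentralIdempotent C} :
    ciSetoid.r a a' → ciSetoid.r b b' → ciSetoid.r (a.inf b) (a'.inf b')
  | ⟨e, he⟩, ⟨f, hf⟩ => ⟨e ⊗ᵢ f, by
    change meetHom a.u b.u = (e.hom ⊗ₘ f.hom) ≫ meetHom a'.u b'.u
    rw [tensorHom_comp_meetHom, ← he, ← hf]⟩

instance instSemilatticeInfQuotient : SemilatticeInf (Quotient (ciSetoid (C := C))) where
  le := Quotient.lift₂ ciLe fun _ _ _ _ ha hb => propext (ciLe_congr ha hb)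
  le_refl x := Quotient.inductionOn x ciLe_refl
  le_trans x y z := Quotient.inductionOn₃ x y z fun _ _ _ => ciLe_trans
  le_antisymm x y := Quotient.inductionOn₂ x y fun _ _ h h' => Quotient.sound (ciLe_antisymm h h')
  inf := Quotient.map₂ inf fun _ _ ha _ _ hb => inf_congr ha hb
  inf_le_left x y := Quotient.inductionOn₂ x y inf_ciLe_left
  inf_le_right x y := Quotient.inductionOn₂ x y inf_ciLe_right
  le_inf x y z := Quotient.inductionOn₃ x y z fun _ _ _ => ciLe_inf

end Braided

end CentralIdempotent

open CentralIdempotent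

/-- The central idempotents of a symmetric monoidal category, identified up to isomorphism
and ordered by factorization, form a meet-semilattice: the top element is the identity
`𝟙 : I ⟶ I` and the meet of `u : U ⟶ I` and `v : V ⟶ I` is `λ_I ∘ (u ⊗ v) : U ⊗ V ⟶ I`. -/
theorem centralIdempotents_semilatticeInf {C : Type*} [Category C] [MonoidalCategory C]
    [SymmetricCategory C] :
    ∃ inst : SemilatticeInf (Quotient (ciSetoid (C := C))),
      (∀ a b : CentralIdempotent C, inst.le ⟦a⟧ ⟦b⟧ ↔ ciLe a b) ∧
      (∃ (h₁ : 𝟙_ C ◁ 𝟙 (𝟙_ C) ≫ (ρ_ (𝟙_ C)).hom = 𝟙 (𝟙_ C) ▷ 𝟙_ C ≫ (λ_ (𝟙_ C)).hom)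
         (h₂ : IsIso (𝟙_ C ◁ 𝟙 (𝟙_ C) ≫ (ρ_ (𝟙_ C)).hom)),
        ∀ a : Quotient (ciSetoid (C := C)),
          inst.le a ⟦⟨𝟙_ C, 𝟙 (𝟙_ C), h₁, h₂⟩⟧) ∧
      (∀ a b : CentralIdempotent C,
        ∃ (h₁ : (a.U ⊗ b.U) ◁ ((a.u ⊗ₘ b.u) ≫ (λ_ (𝟙_ C)).hom) ≫ (ρ_ (a.U ⊗ b.U)).hom =
            ((a.u ⊗ₘ b.u) ≫ (λ_ (𝟙_ C)).hom) ▷ (a.U ⊗ b.U) ≫ (λ_ (a.U ⊗ b.U)).hom)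
          (h₂ : IsIso ((a.U ⊗ b.U) ◁ ((a.u ⊗ₘ b.u) ≫ (λ_ (𝟙_ C)).hom) ≫ (ρ_ (a.U ⊗ b.U)).hom)),
        inst.inf ⟦a⟧ ⟦b⟧ =
          ⟦⟨a.U ⊗ b.U, (a.u ⊗ₘ b.u) ≫ (λ_ (𝟙_ C)).hom, h₁, h₂⟩⟧) :=
  ⟨inferInstance, fun _ _ => Iff.rfl,
    ⟨unit.comm, unit.iso, fun x => Quotient.inductionOn x ciLe_unit⟩,
    fun a b => ⟨(a.inf b).comm, (a.inf b).iso, rfl⟩⟩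
end

section
/- In a cartesian monoidal category (tensor product is categorical product, unit is terminal object 1), a morphism u : U → 1 is a central idempotent if and only if U is subterminal, i.e. the unique map U → 1 is a monomorphism. -/
open CategoryTheory MonoidalCategory

/-- A central idempotent in a monoidal category. -/
def IsCentralIdempotent {C : Type*} [Category C] [MonoidalCategory C]
    {U : C} (u : U ⟶ 𝟙_ C) : Prop :=
  (U ◁ u ≫ (ρ_ U).hom = u ▷ U ≫ (λ_ U).hom) ∧ IsIso (U ◁ u ≫ (ρ_ U).hom)

namespace CategoryTheory.CartesianMonoidalCategory

section SemiCartesian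

variable {C : Type*} [Category C] [SemiCartesianMonoidalCategory C] {U : C}

theorem isCentralIdempotent_iff_fst_eq_snd (u : U ⟶ 𝟙_ C) :
    IsCentralIdempotent u ↔ fst U U = snd U U ∧ IsIso (fst U U) := by
  obtain rfl : u = isTerminalTensorUnit.from U := toUnit_unique _ _
  rw [IsCentralIdempotent, ← fst_def, ← snd_def]

theorem mono_iff_isSubterminal (u : U ⟶ 𝟙_ C) : Mono u ↔ IsSubterminal U := by
  obtain rfl : u = isTerminalTensorUnit.from U := toUnit_unique _ _
  exact ⟨fun _ => isSubterminal_of_mono_isTerminal_from isTerminalTensorUnit,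
    fun h => h.mono_isTerminal_from _⟩

end SemiCartesian

variable {C : Type*} [Category C] [CartesianMonoidalCategory C] {U : C}

theorem isSubterminal_iff_fst_eq_snd : IsSubterminal U ↔ fst U U = snd U U :=
  ⟨fun h => h _ _, fun h _ f g => by rw [← lift_fst f g, h, lift_snd]⟩

theorem isIso_fst_of_fst_eq_snd (h : fst U U = snd U U) : IsIso (fst U U) :=
  ⟨lift (𝟙 U) (𝟙 U), by ext <;> simp [h], by simp⟩

end CategoryTheory.CartesianMonoidalCategory

open CartesianMonoidalCategory in
/-- In a cartesian monoidal category (tensor product the categorical product, unit the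
terminal object), a morphism `u : U ⟶ 1` is a central idempotent if and only if `U` is
subterminal, i.e. the (unique) map `U ⟶ 1` is a monomorphism. -/
theorem isCentralIdempotent_iff_mono {C : Type*} [Category C] [CartesianMonoidalCategory C]
    {U : C} (u : U ⟶ 𝟙_ C) :
    IsCentralIdempotent u ↔ Mono u := by
  rw [isCentralIdempotent_iff_fst_eq_snd, mono_iff_isSubterminal,
    isSubterminal_iff_fst_eq_snd]
  exact ⟨And.left, fun h => ⟨h, isIso_fst_of_fst_eq_snd h⟩⟩
end

section
/- For a central idempotent u : U → I in a symmetric monoidal category C, the data with the same objects as C, hom-sets C|u(A,B) = C(A ⊗ U, B), identity on A given by A ⊗ u, and composition of f : A ⊗ U → B and g : B ⊗ U → C given by g ∘ (f ⊗ U) ∘ (A ⊗ (U ⊗ u))⁻¹ forms a category. -/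
open CategoryTheory MonoidalCategory

variable {C : Type*} [Category C] [MonoidalCategory C]

/-- The multiplication map `U ⊗ U ⟶ U` associated to a candidate central idempotent
`u : U ⟶ I`; `u` is a central idempotent when this map agrees with `λ_U ∘ (u ▷ U)` and
is invertible. -/
abbrev ciMap {U : C} (u : U ⟶ 𝟙_ C) : U ⊗ U ⟶ U :=
  U ◁ u ≫ (ρ_ U).hom

/-- The identity morphism on `A` in the restricted category `C|u`: the morphism
`A ⊗ u : A ⊗ U ⟶ A` (composed with the right unitor). -/
def restrictId {U : C} (u : U ⟶ 𝟙_ C) (A : C) : A ⊗ U ⟶ A :=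
  A ◁ u ≫ (ρ_ A).hom

/-- Composition in the restricted category `C|u`: given `f : A ⊗ U ⟶ B` and
`g : B ⊗ U ⟶ D`, their composite is `g ∘ (f ⊗ U) ∘ (A ⊗ (U ⊗ u))⁻¹`. -/
noncomputable def restrictComp {U : C} (u : U ⟶ 𝟙_ C) [IsIso (ciMap u)] {A B D : C}
    (f : A ⊗ U ⟶ B) (g : B ⊗ U ⟶ D) : A ⊗ U ⟶ D :=
  A ◁ inv (ciMap u) ≫ (α_ A U U).inv ≫ f ▷ U ≫ g

/-- Associativity of the multiplication `ciMap u` for a central idempotent `u`. -/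
lemma restrict_ciMap_assoc {U : C} (u : U ⟶ 𝟙_ C)
    (hcomm : U ◁ u ≫ (ρ_ U).hom = u ▷ U ≫ (λ_ U).hom) :
    ciMap u ▷ U ≫ ciMap u = (α_ U U U).hom ≫ U ◁ ciMap u ≫ ciMap u := by
  calc (U ◁ u ≫ (ρ_ U).hom) ▷ U ≫ ciMap u
      = (U ◁ u) ▷ U ≫ ((α_ U (𝟙_ C) U).hom ≫ U ◁ (λ_ U).hom) ≫ ciMap u := by
        rw [comp_whiskerRight, MonoidalCategory.triangle]; simp
    _ = (α_ U U U).hom ≫ U ◁ (u ▷ U) ≫ U ◁ (λ_ U).hom ≫ ciMap u := by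
        simp only [Category.assoc]; rw [associator_naturality_middle_assoc]
    _ = (α_ U U U).hom ≫ U ◁ ciMap u ≫ ciMap u := by
        rw [← MonoidalCategory.whiskerLeft_comp_assoc, ← hcomm,
          MonoidalCategory.whiskerLeft_comp_assoc]

/-- Cancelling `A ◁ inv (ciMap u)` against `A ◁ ciMap u`. -/
lemma restrict_whiskerLeft_cancel {U : C} (u : U ⟶ 𝟙_ C) [IsIso (ciMap u)]
    (A : C) {X : C} (f : A ⊗ U ⟶ X) :
    A ◁ inv (ciMap u) ≫ A ◁ ciMap u ≫ f = f := by
  rw [← MonoidalCategory.whiskerLeft_comp_assoc, IsIso.inv_hom_id,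
    MonoidalCategory.whiskerLeft_id, Category.id_comp]

/-- Coassociativity of the inverse of the multiplication `ciMap u`. -/
lemma restrict_ciMap_coassoc {U : C} (u : U ⟶ 𝟙_ C) [IsIso (ciMap u)]
    (hcomm : U ◁ u ≫ (ρ_ U).hom = u ▷ U ≫ (λ_ U).hom) :
    (inv (ciMap u) ≫ U ◁ inv (ciMap u)) ≫ (α_ U U U).inv =
      inv (ciMap u) ≫ inv (ciMap u) ▷ U := by
  have h := restrict_ciMap_assoc u hcomm
  rw [← cancel_mono (ciMap u ▷ U), ← cancel_mono (ciMap u)]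
  simp only [Category.assoc]
  conv_lhs => rw [h]
  rw [Iso.inv_hom_id_assoc, ← MonoidalCategory.whiskerLeft_comp_assoc,
    IsIso.inv_hom_id, MonoidalCategory.whiskerLeft_id, Category.id_comp,
    IsIso.inv_hom_id]
  rw [← comp_whiskerRight_assoc, IsIso.inv_hom_id,
    MonoidalCategory.id_whiskerRight, Category.id_comp, IsIso.inv_hom_id]

/-- For a central idempotent `u : U ⟶ I` in a symmetric monoidal category `C`, the data
with the same objects as `C`, hom-sets `C|u(A,B) = C(A ⊗ U, B)`, identities `A ⊗ u` and
composition `g ∘ (f ⊗ U) ∘ (A ⊗ (U ⊗ u))⁻¹` satisfies the axioms of a category. -/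
theorem restrict_is_category {C : Type*} [Category C] [MonoidalCategory C]
    [SymmetricCategory C] {U : C} (u : U ⟶ 𝟙_ C)
    (hcomm : U ◁ u ≫ (ρ_ U).hom = u ▷ U ≫ (λ_ U).hom) [IsIso (ciMap u)] :
    (∀ {A B : C} (f : A ⊗ U ⟶ B), restrictComp u (restrictId u A) f = f) ∧
    (∀ {A B : C} (f : A ⊗ U ⟶ B), restrictComp u f (restrictId u B) = f) ∧
    (∀ {A B D E : C} (f : A ⊗ U ⟶ B) (g : B ⊗ U ⟶ D) (h : D ⊗ U ⟶ E),
      restrictComp u (restrictComp u f g) h = restrictComp u f (restrictComp u g h)) := by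
  have hm : u ▷ U ≫ (λ_ U).hom = ciMap u := hcomm.symm
  refine ⟨?_, ?_, ?_⟩
  · intro A B f
    rw [restrictComp, restrictId, comp_whiskerRight]
    simp only [Category.assoc]
    rw [← associator_inv_naturality_middle_assoc, triangle_assoc_comp_right_assoc,
      ← MonoidalCategory.whiskerLeft_comp_assoc A (u ▷ U) (λ_ U).hom, hm]
    exact restrict_whiskerLeft_cancel u A f
  · intro A B f
    rw [restrictComp, restrictId, ← Category.assoc (f ▷ U), ← whisker_exchange,
      Category.assoc, rightUnitor_naturality, ← associator_inv_naturality_right_assoc,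
      ← whiskerLeft_rightUnitor_assoc,
      ← MonoidalCategory.whiskerLeft_comp_assoc A (U ◁ u) (ρ_ U).hom]
    exact restrict_whiskerLeft_cancel u A f
  · intro A B D E f g h
    rw [restrictComp, restrictComp, restrictComp, restrictComp]
    rw [← whisker_exchange_assoc, associator_inv_naturality_left_assoc,
      ← associator_inv_naturality_right_assoc, ← pentagon_inv_assoc,
      ← MonoidalCategory.whiskerLeft_comp_assoc,
      ← MonoidalCategory.whiskerLeft_comp_assoc,
      restrict_ciMap_coassoc u hcomm,
      MonoidalCategory.whiskerLeft_comp_assoc,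
      associator_inv_naturality_middle_assoc]
    simp only [comp_whiskerRight, Category.assoc]
end

section
/- If u ≤ v are central idempotents in a symmetric monoidal category C, witnessed by m : U → V with u = v ∘ m, then the assignment A ↦ A on objects and (f : A ⊗ V → B) ↦ f ∘ (A ⊗ m) on morphisms defines a functor C|_{u≤v} : C|v → C|u. -/
open CategoryTheory MonoidalCategory

variable {C : Type*} [Category C] [MonoidalCategory C]

/-! The morphism `m` intertwines the multiplications `U ⊗ U ⟶ U` and `V ⊗ V ⟶ V`, hence also
their inverses; together with naturality of whiskering and of the associator this turns
precomposition with `A ◁ m` into a map compatible with identities and composition. -/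

section

variable {U V : C} (m : U ⟶ V) (v : V ⟶ 𝟙_ C)

theorem tensorHom_comp_ciMap : (m ⊗ₘ m) ≫ ciMap v = ciMap (m ≫ v) ≫ m := by
  rw [ciMap, ciMap, MonoidalCategory.tensorHom_def, Category.assoc, ← whiskerLeft_comp_assoc,
    ← whisker_exchange_assoc, rightUnitor_naturality, Category.assoc]

theorem comp_inv_ciMap [IsIso (ciMap v)] [IsIso (ciMap (m ≫ v))] :
    m ≫ inv (ciMap v) = inv (ciMap (m ≫ v)) ≫ (m ⊗ₘ m) := by
  rw [IsIso.eq_inv_comp, ← Category.assoc, ← tensorHom_comp_ciMap, Category.assoc,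
    IsIso.hom_inv_id, Category.comp_id]

theorem whiskerLeft_comp_restrictId (A : C) :
    A ◁ m ≫ restrictId v A = restrictId (m ≫ v) A := by
  rw [restrictId, restrictId, whiskerLeft_comp_assoc]

theorem whiskerLeft_comp_restrictComp [IsIso (ciMap v)] [IsIso (ciMap (m ≫ v))] {A B D : C}
    (f : A ⊗ V ⟶ B) (g : B ⊗ V ⟶ D) :
    A ◁ m ≫ restrictComp v f g = restrictComp (m ≫ v) (A ◁ m ≫ f) (B ◁ m ≫ g) := by
  rw [restrictComp, restrictComp, ← whiskerLeft_comp_assoc, comp_inv_ciMap,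
    MonoidalCategory.tensorHom_def]
  simp only [whiskerLeft_comp, Category.assoc, associator_inv_naturality_middle_assoc,
    associator_inv_naturality_right_assoc, comp_whiskerRight, whisker_exchange_assoc]

end

theorem restrict_functor_general {C : Type*} [Category C] [MonoidalCategory C]
    {U V : C} (u : U ⟶ 𝟙_ C) (v : V ⟶ 𝟙_ C) (m : U ⟶ V)
    (hm : u = m ≫ v) [IsIso (ciMap u)] [IsIso (ciMap v)] :
    (∀ A : C, A ◁ m ≫ restrictId v A = restrictId u A) ∧
    (∀ {A B D : C} (f : A ⊗ V ⟶ B) (g : B ⊗ V ⟶ D),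
      A ◁ m ≫ restrictComp v f g = restrictComp u (A ◁ m ≫ f) (B ◁ m ≫ g)) := by
  subst hm
  exact ⟨whiskerLeft_comp_restrictId m v, whiskerLeft_comp_restrictComp m v⟩

/-- If `u ≤ v` are central idempotents of a symmetric monoidal category `C`, witnessed by
`m : U ⟶ V` with `u = v ∘ m`, then `A ↦ A` on objects together with
`(f : A ⊗ V ⟶ B) ↦ f ∘ (A ⊗ m)` on morphisms defines a functor `C|v ⥤ C|u`:
it preserves identities and composition. -/
theorem restrict_functor {C : Type*} [Category C] [MonoidalCategory C]
    [SymmetricCategory C] {U V : C} (u : U ⟶ 𝟙_ C) (v : V ⟶ 𝟙_ C) (m : U ⟶ V)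
    (hm : u = m ≫ v)
    (hcu : U ◁ u ≫ (ρ_ U).hom = u ▷ U ≫ (λ_ U).hom) [IsIso (ciMap u)]
    (hcv : V ◁ v ≫ (ρ_ V).hom = v ▷ V ≫ (λ_ V).hom) [IsIso (ciMap v)] :
    (∀ A : C, A ◁ m ≫ restrictId v A = restrictId u A) ∧
    (∀ {A B D : C} (f : A ⊗ V ⟶ B) (g : B ⊗ V ⟶ D),
      A ◁ m ≫ restrictComp v f g = restrictComp u (A ◁ m ≫ f) (B ◁ m ≫ g)) :=
  restrict_functor_general u v m hm
end

section
/- For a central idempotent u : U → I in a symmetric monoidal category, the endofunctor A ↦ A ⊗ U carries a comonad structure, with counit A ⊗ u : A ⊗ U → A and comultiplication given by the inverse of A ⊗ (ρ_U ∘ (U ⊗ u)) : A ⊗ U ⊗ U → A ⊗ U. -/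
open CategoryTheory MonoidalCategory

variable {C : Type*} [Category C] [MonoidalCategory C]

variable {C : Type*} [Category C] [MonoidalCategory C]

/-- The counit of the comonad `− ⊗ U`: `A ⊗ u : A ⊗ U ⟶ A`. -/
def wCounit {U : C} (u : U ⟶ 𝟙_ C) (A : C) : A ⊗ U ⟶ A :=
  A ◁ u ≫ (ρ_ A).hom

/-- The comultiplication of the comonad `− ⊗ U`:
the inverse of `A ⊗ (ρ_U ∘ (U ⊗ u)) : A ⊗ (U ⊗ U) ⟶ A ⊗ U`. -/
noncomputable def wComul {U : C} (u : U ⟶ 𝟙_ C) [IsIso (ciMap u)] (A : C) :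
    A ⊗ U ⟶ (A ⊗ U) ⊗ U :=
  A ◁ inv (ciMap u) ≫ (α_ A U U).inv


section Aux
variable {C : Type*} [Category C] [MonoidalCategory C]

lemma ci_uu {U : C} (u : U ⟶ 𝟙_ C) :
    u ▷ U ≫ (λ_ U).hom ≫ u = U ◁ u ≫ (ρ_ U).hom ≫ u := by
  rw [← leftUnitor_naturality, ← rightUnitor_naturality, ← Category.assoc, ← Category.assoc,
    whisker_exchange]
  simp [unitors_equal]

lemma ciMap_assoc' {U : C} (u : U ⟶ 𝟙_ C) :
    (ciMap u) ▷ U ≫ ciMap u = (α_ U U U).hom ≫ U ◁ ciMap u ≫ ciMap u := by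
  simp [ciMap, whisker_exchange, ← MonoidalCategory.whiskerLeft_comp, ci_uu]

lemma ci_delta_coassoc {U : C} (u : U ⟶ 𝟙_ C) [IsIso (ciMap u)] :
    inv (ciMap u) ≫ (inv (ciMap u)) ▷ U =
      inv (ciMap u) ≫ U ◁ inv (ciMap u) ≫ (α_ U U U).inv := by
  have l : (inv (ciMap u) ≫ inv (ciMap u) ▷ U) ≫ (ciMap u ▷ U ≫ ciMap u) = 𝟙 _ := by
    simp only [Category.assoc, ← comp_whiskerRight_assoc, IsIso.inv_hom_id,
      id_whiskerRight, Category.id_comp]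
  have r : (inv (ciMap u) ≫ U ◁ inv (ciMap u) ≫ (α_ U U U).inv) ≫
      (ciMap u ▷ U ≫ ciMap u) = 𝟙 _ := by
    rw [ciMap_assoc']
    simp only [Category.assoc, Iso.inv_hom_id_assoc]
    rw [← MonoidalCategory.whiskerLeft_comp_assoc, IsIso.inv_hom_id,
      MonoidalCategory.whiskerLeft_id, Category.id_comp, IsIso.inv_hom_id]
  rw [← cancel_mono (ciMap u ▷ U ≫ ciMap u), l, r]

end Aux

/-- For a central idempotent `u : U ⟶ I` in a symmetric monoidal category, the endofunctor
`A ↦ A ⊗ U` carries a comonad structure, with counit `A ⊗ u` and comultiplication the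
inverse of `A ⊗ (ρ_U ∘ (U ⊗ u))`: both are natural and satisfy the comonad laws. -/
theorem tensor_comonad {C : Type*} [Category C] [MonoidalCategory C]
    [SymmetricCategory C] {U : C} (u : U ⟶ 𝟙_ C)
    (hcomm : U ◁ u ≫ (ρ_ U).hom = u ▷ U ≫ (λ_ U).hom) [IsIso (ciMap u)] :
    -- naturality of the counit
    (∀ {A B : C} (f : A ⟶ B), f ▷ U ≫ wCounit u B = wCounit u A ≫ f) ∧
    -- naturality of the comultiplication
    (∀ {A B : C} (f : A ⟶ B), f ▷ U ≫ wComul u B = wComul u A ≫ (f ▷ U) ▷ U) ∧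
    -- counit laws
    (∀ A : C, wComul u A ≫ wCounit u A ▷ U = 𝟙 (A ⊗ U)) ∧
    (∀ A : C, wComul u A ≫ wCounit u (A ⊗ U) = 𝟙 (A ⊗ U)) ∧
    -- coassociativity
    (∀ A : C, wComul u A ≫ wComul u A ▷ U = wComul u A ≫ wComul u (A ⊗ U)) := by
  refine ⟨?_, ?_, ?_, ?_, ?_⟩
  · intro A B f
    rw [wCounit, wCounit, ← whisker_exchange_assoc]
    simp
  · intro A B f
    rw [wComul, wComul, ← whisker_exchange_assoc]
    simp
  · intro A
    simp [wComul, wCounit, ← MonoidalCategory.whiskerLeft_comp, ← hcomm]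
  · intro A
    simp only [wComul, wCounit, Category.assoc,
      ← associator_inv_naturality_right_assoc]
    rw [← whiskerLeft_rightUnitor]
    simp only [← MonoidalCategory.whiskerLeft_comp_assoc,
      ← MonoidalCategory.whiskerLeft_comp, IsIso.inv_hom_id_assoc, IsIso.inv_hom_id,
      MonoidalCategory.whiskerLeft_id]
  · intro A
    simp only [wComul, comp_whiskerRight, Category.assoc,
      ← associator_inv_naturality_middle_assoc, ← associator_inv_naturality_right_assoc,
      ← MonoidalCategory.whiskerLeft_comp_assoc]
    rw [ci_delta_coassoc]
    simp [pentagon_inv]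
end

section
/- Let E be a monoidal category whose tensor unit 0 is an initial object. Then every E-indexed monad on a category C (a functor E → Monad(C)) induces an E-graded monad on C (a lax monoidal functor E → [C,C]): keep the same underlying functors T_u, define the graded unit as η_{0,A} : A → T_0(A), and the graded multiplication T_u(T_v(A)) → T_{u⊗v}(A) as T_{u⊗!}(T_{!⊗v}(A)) ∘ μ_{u⊗v,A} suitably composed with unitor reindexings and the monad multiplication at grade u ⊗ v. -/
open CategoryTheory MonoidalCategory Limits

variable {C E : Type*} [Category C] [Category E] [MonoidalCategory E]

/-- The graded multiplication induced by an `E`-indexed monad `J : E ⥤ Monad C` when the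
tensor unit of `E` is initial: `T_u(T_v(A)) ⟶ T_{u⊗v}(A)` is obtained by reindexing along
`v ≅ 0 ⊗ v ⟶ u ⊗ v` inside, along `u ≅ u ⊗ 0 ⟶ u ⊗ v` outside, and then applying the
monad multiplication at grade `u ⊗ v`. -/
def gradedMul (J : E ⥤ Monad C) (hI : IsInitial (𝟙_ E)) (u v : E) (A : C) :
    (J.obj u).toFunctor.obj ((J.obj v).toFunctor.obj A) ⟶ (J.obj (u ⊗ v)).toFunctor.obj A :=
  (J.obj u).toFunctor.map ((J.map ((λ_ v).inv ≫ hI.to u ▷ v)).toNatTrans.app A) ≫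
    (J.map ((ρ_ u).inv ≫ u ◁ hI.to v)).toNatTrans.app ((J.obj (u ⊗ v)).toFunctor.obj A) ≫
    (J.obj (u ⊗ v)).μ.app A

namespace IndexedToGradedAux

set_option linter.unusedSectionVars false

variable (J : E ⥤ Monad C)

/-- Shorthand for the component of the monad morphism `J.map f`. -/
abbrev s {u v : E} (f : u ⟶ v) (A : C) :
    (J.obj u).toFunctor.obj A ⟶ (J.obj v).toFunctor.obj A :=
  (J.map f).toNatTrans.app A

lemma s_comp {u v w : E} (f : u ⟶ v) (g : v ⟶ w) (A : C) :
    s J (f ≫ g) A = s J f A ≫ s J g A := by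
  show (J.map (f ≫ g)).toNatTrans.app A = _
  rw [J.map_comp, MonadHom.comp_toNatTrans, NatTrans.comp_app]

lemma s_nat {u u' : E} (f : u ⟶ u') {A B : C} (h : A ⟶ B) :
    (J.obj u).toFunctor.map h ≫ s J f B = s J f A ≫ (J.obj u').toFunctor.map h :=
  (J.map f).toNatTrans.naturality h

lemma s_η {u u' : E} (f : u ⟶ u') (A : C) :
    (J.obj u).η.app A ≫ s J f A = (J.obj u').η.app A :=
  (J.map f).app_η A

lemma s_μ {u u' : E} (f : u ⟶ u') (A : C) :
    (J.obj u).μ.app A ≫ s J f A =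
      (J.obj u).toFunctor.map (s J f A) ≫ s J f ((J.obj u').toFunctor.obj A) ≫
        (J.obj u').μ.app A := by
  rw [(J.map f).app_μ A, Category.assoc]

/-- The general "Kleisli-style" composite. -/
def K {a b c : E} (f : a ⟶ c) (g : b ⟶ c) (A : C) :
    (J.obj a).toFunctor.obj ((J.obj b).toFunctor.obj A) ⟶ (J.obj c).toFunctor.obj A :=
  (J.obj a).toFunctor.map (s J g A) ≫ s J f ((J.obj c).toFunctor.obj A) ≫ (J.obj c).μ.app A

lemma K_natA {a b c : E} (f : a ⟶ c) (g : b ⟶ c) {A B : C} (h : A ⟶ B) :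
    (J.obj a).toFunctor.map ((J.obj b).toFunctor.map h) ≫ K J f g B =
      K J f g A ≫ (J.obj c).toFunctor.map h := by
  rw [K, K]
  slice_lhs 1 2 => rw [← Functor.map_comp, s_nat J g h, Functor.map_comp]
  slice_lhs 2 3 => rw [s_nat]
  slice_lhs 3 4 =>
    rw [show (J.obj c).toFunctor.map ((J.obj c).toFunctor.map h) ≫ (J.obj c).μ.app B =
        (J.obj c).μ.app A ≫ (J.obj c).toFunctor.map h from (J.obj c).μ.naturality h]
  simp only [Category.assoc]

lemma K_left {a' a b c : E} (f' : a' ⟶ a) (f : a ⟶ c) (g : b ⟶ c) (A : C) :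
    s J f' ((J.obj b).toFunctor.obj A) ≫ K J f g A = K J (f' ≫ f) g A := by
  simp only [K, s_comp]
  rw [← Category.assoc, ← s_nat, Category.assoc]
  simp only [Category.assoc]

lemma K_right {a b' b c : E} (g' : b' ⟶ b) (f : a ⟶ c) (g : b ⟶ c) (A : C) :
    (J.obj a).toFunctor.map (s J g' A) ≫ K J f g A = K J f (g' ≫ g) A := by
  simp only [K, s_comp, Functor.map_comp, Category.assoc]

lemma K_post {a b c c' : E} (f : a ⟶ c) (g : b ⟶ c) (h : c ⟶ c') (A : C) :
    K J f g A ≫ s J h A = K J (f ≫ h) (g ≫ h) A := by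
  simp only [K, s_comp, Functor.map_comp, Category.assoc]
  congr 1
  rw [s_μ, ← Category.assoc ((J.map f).toNatTrans.app _), ← s_nat]
  simp [Category.assoc]

lemma K_unit_left {a b c : E} (f : a ⟶ c) (g : b ⟶ c) (A : C) :
    (J.obj a).η.app ((J.obj b).toFunctor.obj A) ≫ K J f g A = s J g A := by
  rw [K, ← Category.assoc, ← (J.obj a).η.naturality (s J g A), Category.assoc,
    ← Category.assoc ((J.obj a).η.app _), s_η]
  simp

lemma K_unit_right {a b c : E} (f : a ⟶ c) (g : b ⟶ c) (A : C) :
    (J.obj a).toFunctor.map ((J.obj b).η.app A) ≫ K J f g A = s J f A := by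
  rw [K, ← Category.assoc, ← Functor.map_comp, s_η, ← Category.assoc, s_nat, Category.assoc]
  simp

/-- Normal form for a triple composite. -/
def NF {a b b₂ n : E} (f₁ : a ⟶ n) (g₁ : b ⟶ n) (g₂ : b₂ ⟶ n) (A : C) :
    (J.obj a).toFunctor.obj ((J.obj b).toFunctor.obj ((J.obj b₂).toFunctor.obj A)) ⟶
      (J.obj n).toFunctor.obj A :=
  (J.obj a).toFunctor.map ((J.obj b).toFunctor.map (s J g₂ A)) ≫
    (J.obj a).toFunctor.map (s J g₁ ((J.obj n).toFunctor.obj A)) ≫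
    s J f₁ ((J.obj n).toFunctor.obj ((J.obj n).toFunctor.obj A)) ≫
    (J.obj n).μ.app ((J.obj n).toFunctor.obj A) ≫ (J.obj n).μ.app A

lemma K_K {a b b₂ m n : E} (f₁ : a ⟶ m) (g₁ : b ⟶ m) (f₂ : m ⟶ n) (g₂ : b₂ ⟶ n) (A : C) :
    K J f₁ g₁ ((J.obj b₂).toFunctor.obj A) ≫ K J f₂ g₂ A =
      NF J (f₁ ≫ f₂) (g₁ ≫ f₂) g₂ A := by
  rw [K, K, NF]
  slice_lhs 3 4 =>
    rw [show (J.obj m).μ.app ((J.obj b₂).toFunctor.obj A) ≫ (J.obj m).toFunctor.map (s J g₂ A) =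
        (J.obj m).toFunctor.map ((J.obj m).toFunctor.map (s J g₂ A)) ≫
          (J.obj m).μ.app ((J.obj n).toFunctor.obj A) from ((J.obj m).μ.naturality _).symm]
  slice_lhs 4 5 => rw [s_μ]
  slice_lhs 3 4 => rw [← Functor.map_comp]
  slice_lhs 2 3 => rw [← s_nat]
  slice_lhs 1 2 =>
    rw [← Functor.map_comp, ← Category.assoc, ← s_nat, Category.assoc, ← s_comp,
      Functor.map_comp]
  slice_lhs 3 4 => rw [← s_comp]
  simp only [Category.assoc]

lemma map_K_K {a b b₂ p n : E} (f₃ : b ⟶ p) (g₃ : b₂ ⟶ p) (F : a ⟶ n) (G : p ⟶ n) (A : C) :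
    (J.obj a).toFunctor.map (K J f₃ g₃ A) ≫ K J F G A = NF J F (f₃ ≫ G) (g₃ ≫ G) A := by
  rw [NF]
  have inner : K J f₃ g₃ A ≫ s J G A =
      (J.obj b).toFunctor.map (s J (g₃ ≫ G) A) ≫ s J (f₃ ≫ G) ((J.obj n).toFunctor.obj A) ≫
        (J.obj n).μ.app A := by
    rw [K]
    slice_lhs 3 4 => rw [s_μ]
    slice_lhs 2 3 => rw [← s_nat]
    slice_lhs 1 2 => rw [← Functor.map_comp, ← s_comp]
    slice_lhs 2 3 => rw [← s_comp]
  rw [show K J F G A = (J.obj a).toFunctor.map (s J G A) ≫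
      s J F ((J.obj n).toFunctor.obj A) ≫ (J.obj n).μ.app A from rfl,
    ← Category.assoc, ← Functor.map_comp, inner]
  simp only [Functor.map_comp, Category.assoc]
  congr 2
  rw [← Category.assoc, s_nat, Category.assoc, (J.obj n).assoc A]

section Arrows

variable (hI : IsInitial (𝟙_ E))

lemma to_tensor_right (v w : E) :
    hI.to (v ⊗ w) = hI.to v ≫ (ρ_ v).inv ≫ v ◁ hI.to w := hI.hom_ext _ _

lemma E1 (u v w : E) :
    ((ρ_ u).inv ≫ u ◁ hI.to (v ⊗ w)) ≫ (α_ u v w).inv =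
      ((ρ_ u).inv ≫ u ◁ hI.to v) ≫ ((ρ_ (u ⊗ v)).inv ≫ (u ⊗ v) ◁ hI.to w) := by
  rw [to_tensor_right hI v w]
  generalize hI.to v = t
  generalize hI.to w = t'
  coherence

lemma E2 (u v w : E) :
    ((ρ_ v).inv ≫ v ◁ hI.to w) ≫ ((λ_ (v ⊗ w)).inv ≫ hI.to u ▷ (v ⊗ w)) ≫ (α_ u v w).inv =
      ((λ_ v).inv ≫ hI.to u ▷ v) ≫ ((ρ_ (u ⊗ v)).inv ≫ (u ⊗ v) ◁ hI.to w) := by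
  generalize hI.to u = t
  generalize hI.to w = t'
  slice_rhs 2 3 => rw [rightUnitor_inv_naturality]
  slice_rhs 3 4 => rw [← whisker_exchange]
  coherence

lemma E3 (u v w : E) :
    ((λ_ w).inv ≫ hI.to v ▷ w) ≫ ((λ_ (v ⊗ w)).inv ≫ hI.to u ▷ (v ⊗ w)) ≫ (α_ u v w).inv =
      (λ_ w).inv ≫ hI.to (u ⊗ v) ▷ w := by
  rw [show hI.to (u ⊗ v) = hI.to v ≫ (λ_ v).inv ≫ hI.to u ▷ v from hI.hom_ext _ _]
  generalize hI.to v = t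
  generalize hI.to u = t'
  coherence

lemma natu_a {u u' : E} (f : u ⟶ u') (v : E) :
    f ≫ ((ρ_ u').inv ≫ u' ◁ hI.to v) = ((ρ_ u).inv ≫ u ◁ hI.to v) ≫ f ▷ v := by
  generalize hI.to v = t
  slice_lhs 1 2 => rw [rightUnitor_inv_naturality]
  slice_lhs 2 3 => rw [← whisker_exchange]
  simp only [Category.assoc]

lemma natu_b {u u' : E} (f : u ⟶ u') (v : E) :
    (λ_ v).inv ≫ hI.to u' ▷ v = ((λ_ v).inv ≫ hI.to u ▷ v) ≫ f ▷ v := by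
  rw [show hI.to u' = hI.to u ≫ f from hI.hom_ext _ _, comp_whiskerRight]
  simp only [Category.assoc]

lemma natv_c (u : E) {v v' : E} (g : v ⟶ v') :
    (ρ_ u).inv ≫ u ◁ hI.to v' = ((ρ_ u).inv ≫ u ◁ hI.to v) ≫ u ◁ g := by
  rw [show hI.to v' = hI.to v ≫ g from hI.hom_ext _ _, MonoidalCategory.whiskerLeft_comp]
  simp only [Category.assoc]

lemma natv_d (u : E) {v v' : E} (g : v ⟶ v') :
    g ≫ ((λ_ v').inv ≫ hI.to u ▷ v') = ((λ_ v).inv ≫ hI.to u ▷ v) ≫ u ◁ g := by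
  generalize hI.to u = t
  slice_lhs 1 2 => rw [leftUnitor_inv_naturality]
  slice_lhs 2 3 => rw [whisker_exchange]
  simp only [Category.assoc]

lemma unit_l (v : E) : (λ_ v).inv ≫ hI.to (𝟙_ E) ▷ v = (λ_ v).inv := by
  rw [show hI.to (𝟙_ E) = 𝟙 _ from hI.hom_ext _ _]
  simp

lemma unit_r (v : E) : (ρ_ v).inv ≫ v ◁ hI.to (𝟙_ E) = (ρ_ v).inv := by
  rw [show hI.to (𝟙_ E) = 𝟙 _ from hI.hom_ext _ _]
  simp

end Arrows

lemma gradedMul_eq (hI : IsInitial (𝟙_ E)) (u v : E) (A : C) :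
    gradedMul J hI u v A =
      K J ((ρ_ u).inv ≫ u ◁ hI.to v) ((λ_ v).inv ≫ hI.to u ▷ v) A := rfl

end IndexedToGradedAux

open IndexedToGradedAux

/-- If the tensor unit of a monoidal category `E` is initial, then every `E`-indexed monad
`J : E ⥤ Monad C` induces an `E`-graded monad on `C`, i.e. a lax monoidal functor
`E ⥤ [C,C]`: the underlying functors are the `T_u = J(u)`, the graded unit is
`η_{0,A} : A ⟶ T_0(A)`, and the graded multiplication is `gradedMul`; these data are
natural and satisfy the lax monoidal (graded monad) coherence laws. -/
theorem indexed_to_graded (J : E ⥤ Monad C) (hI : IsInitial (𝟙_ E)) :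
    -- naturality of the graded multiplication in A
    (∀ (u v : E) {A B : C} (f : A ⟶ B),
      (J.obj u).toFunctor.map ((J.obj v).toFunctor.map f) ≫ gradedMul J hI u v B =
        gradedMul J hI u v A ≫ (J.obj (u ⊗ v)).toFunctor.map f) ∧
    -- naturality of the graded multiplication in u
    (∀ {u u' : E} (f : u ⟶ u') (v : E) (A : C),
      (J.map f).toNatTrans.app ((J.obj v).toFunctor.obj A) ≫ gradedMul J hI u' v A =
        gradedMul J hI u v A ≫ (J.map (f ▷ v)).toNatTrans.app A) ∧
    -- naturality of the graded multiplication in v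
    (∀ (u : E) {v v' : E} (g : v ⟶ v') (A : C),
      (J.obj u).toFunctor.map ((J.map g).toNatTrans.app A) ≫ gradedMul J hI u v' A =
        gradedMul J hI u v A ≫ (J.map (u ◁ g)).toNatTrans.app A) ∧
    -- left unitality
    (∀ (v : E) (A : C),
      (J.obj (𝟙_ E)).η.app ((J.obj v).toFunctor.obj A) ≫ gradedMul J hI (𝟙_ E) v A =
        (J.map (λ_ v).inv).toNatTrans.app A) ∧
    -- right unitality
    (∀ (v : E) (A : C),
      (J.obj v).toFunctor.map ((J.obj (𝟙_ E)).η.app A) ≫ gradedMul J hI v (𝟙_ E) A =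
        (J.map (ρ_ v).inv).toNatTrans.app A) ∧
    -- associativity
    (∀ (u v w : E) (A : C),
      gradedMul J hI u v ((J.obj w).toFunctor.obj A) ≫ gradedMul J hI (u ⊗ v) w A =
        (J.obj u).toFunctor.map (gradedMul J hI v w A) ≫ gradedMul J hI u (v ⊗ w) A ≫
          (J.map (α_ u v w).inv).toNatTrans.app A) := by
  refine ⟨?_, ?_, ?_, ?_, ?_, ?_⟩
  · intro u v A B f
    rw [gradedMul_eq, gradedMul_eq]
    exact K_natA J _ _ f
  · intro u u' f v A
    show s J f ((J.obj v).toFunctor.obj A) ≫ gradedMul J hI u' v A =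
      gradedMul J hI u v A ≫ s J (f ▷ v) A
    rw [gradedMul_eq, gradedMul_eq, K_left, K_post, natu_a hI f v, natu_b hI f v]
  · intro u v v' g A
    show (J.obj u).toFunctor.map (s J g A) ≫ gradedMul J hI u v' A =
      gradedMul J hI u v A ≫ s J (u ◁ g) A
    rw [gradedMul_eq, gradedMul_eq, K_right, K_post, natv_c hI u g, natv_d hI u g]
  · intro v A
    show _ = s J (λ_ v).inv A
    rw [gradedMul_eq, K_unit_left, unit_l hI v]
  · intro v A
    show _ = s J (ρ_ v).inv A
    rw [gradedMul_eq, K_unit_right, unit_r hI v]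
  · intro u v w A
    show _ = _ ≫ _ ≫ s J (α_ u v w).inv A
    rw [gradedMul_eq, gradedMul_eq, gradedMul_eq, gradedMul_eq, K_post, K_K, map_K_K,
      E1 hI u v w, E2 hI u v w, E3 hI u v w]
end

section
/- Let E be a monoidal category with codiagonals, i.e. a natural transformation ∇_u : u ⊗ u → u compatible with the coherence isomorphisms. Then every E-graded monad (T_u, η, μ_{u,v}) on a category C induces an E-indexed monad with the same underlying functors: unit η̄_{u,A} = T_{!_u}(η_A) (reindexing of the graded unit), and multiplication μ̄_{u,A} = T_{∇_u}(A) ∘ μ_{u,u,A}; each (T_u, η̄_u, μ̄_u) is a monad on C. -/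
open CategoryTheory MonoidalCategory

/-!
A monoid object `(u, !_u, ∇_u)` of `E` is sent by the lax monoidal functor `T` to a monoid in
`[C, C]` under composition, i.e. to a monad: the unit is `ε` followed by `T_{!_u}`, the
multiplication is `μ_{u,u}` followed by `T_{∇_u}`. Each monad law reduces, through the
naturality of `μ` in its grades, to a graded monad law followed by `T` applied to the
corresponding monoid law of `u`.
-/

lemma CategoryTheory.Functor.map_comp_app {D E C : Type*} [Category D] [Category E] [Category C]
    (F : D ⥤ E ⥤ C) {u v w : D} (f : u ⟶ v) (g : v ⟶ w) (A : E) :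
    (F.map f).app A ≫ (F.map g).app A = (F.map (f ≫ g)).app A := by
  rw [F.map_comp, NatTrans.comp_app]

structure GradedMonad (E C : Type*) [Category C] [Category E] [MonoidalCategory E] where
  T : E ⥤ (C ⥤ C)
  ε : 𝟭 C ⟶ T.obj (𝟙_ E)
  μ : ∀ (u v : E) (A : C), (T.obj u).obj ((T.obj v).obj A) ⟶ (T.obj (u ⊗ v)).obj A
  μ_natA : ∀ (u v : E) {A B : C} (f : A ⟶ B),
    (T.obj u).map ((T.obj v).map f) ≫ μ u v B = μ u v A ≫ (T.obj (u ⊗ v)).map f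
  μ_natu : ∀ {u u' : E} (f : u ⟶ u') (v : E) (A : C),
    (T.map f).app ((T.obj v).obj A) ≫ μ u' v A = μ u v A ≫ (T.map (f ▷ v)).app A
  μ_natv : ∀ (u : E) {v v' : E} (g : v ⟶ v') (A : C),
    (T.obj u).map ((T.map g).app A) ≫ μ u v' A = μ u v A ≫ (T.map (u ◁ g)).app A
  ε_μ : ∀ (v : E) (A : C), ε.app ((T.obj v).obj A) ≫ μ (𝟙_ E) v A = (T.map (λ_ v).inv).app A
  map_ε_μ : ∀ (v : E) (A : C),
    (T.obj v).map (ε.app A) ≫ μ v (𝟙_ E) A = (T.map (ρ_ v).inv).app A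
  μ_assoc : ∀ (u v w : E) (A : C),
    μ u v ((T.obj w).obj A) ≫ μ (u ⊗ v) w A =
      (T.obj u).map (μ v w A) ≫ μ u (v ⊗ w) A ≫ (T.map (α_ u v w).inv).app A

namespace GradedMonad

variable {E C : Type*} [Category C] [Category E] [MonoidalCategory E] (M : GradedMonad E C)

def ηRegraded {u : E} (p : 𝟙_ E ⟶ u) : 𝟭 C ⟶ M.T.obj u :=
  M.ε ≫ M.T.map p

def μRegraded {u v w : E} (d : u ⊗ v ⟶ w) : M.T.obj v ⋙ M.T.obj u ⟶ M.T.obj w where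
  app A := M.μ u v A ≫ (M.T.map d).app A
  naturality A B f := by
    rw [Functor.comp_map, reassoc_of% (M.μ_natA u v f), (M.T.map d).naturality f, Category.assoc]

lemma ηRegraded_μRegraded {u v w : E} (p : 𝟙_ E ⟶ v) (d : v ⊗ u ⟶ w) (A : C) :
    (M.ηRegraded p).app ((M.T.obj u).obj A) ≫ (M.μRegraded d).app A =
      (M.T.map ((λ_ u).inv ≫ p ▷ u ≫ d)).app A := by
  calc (M.ηRegraded p).app ((M.T.obj u).obj A) ≫ (M.μRegraded d).app A
      = M.ε.app _ ≫ ((M.T.map p).app _ ≫ M.μ v u A) ≫ (M.T.map d).app A := by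
        simp only [ηRegraded, NatTrans.comp_app, μRegraded, Category.assoc]
    _ = (M.ε.app _ ≫ M.μ (𝟙_ E) u A) ≫ (M.T.map (p ▷ u)).app A ≫ (M.T.map d).app A := by
        rw [M.μ_natu]; simp only [Category.assoc]
    _ = (M.T.map ((λ_ u).inv ≫ p ▷ u ≫ d)).app A := by
        rw [M.ε_μ, M.T.map_comp_app, M.T.map_comp_app]

lemma map_ηRegraded_μRegraded {u v w : E} (p : 𝟙_ E ⟶ v) (d : u ⊗ v ⟶ w) (A : C) :
    (M.T.obj u).map ((M.ηRegraded p).app A) ≫ (M.μRegraded d).app A =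
      (M.T.map ((ρ_ u).inv ≫ u ◁ p ≫ d)).app A := by
  calc (M.T.obj u).map ((M.ηRegraded p).app A) ≫ (M.μRegraded d).app A
      = (M.T.obj u).map (M.ε.app A) ≫ ((M.T.obj u).map ((M.T.map p).app A) ≫ M.μ u v A) ≫
          (M.T.map d).app A := by
        simp only [ηRegraded, NatTrans.comp_app, μRegraded, Functor.map_comp, Category.assoc]
    _ = ((M.T.obj u).map (M.ε.app A) ≫ M.μ u (𝟙_ E) A) ≫ (M.T.map (u ◁ p)).app A ≫
          (M.T.map d).app A := by
        rw [M.μ_natv]; simp only [Category.assoc]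
    _ = (M.T.map ((ρ_ u).inv ≫ u ◁ p ≫ d)).app A := by
        rw [M.map_ε_μ, M.T.map_comp_app, M.T.map_comp_app]

lemma map_μRegraded_μRegraded {u v w x y : E} (d : v ⊗ w ⟶ x) (d' : u ⊗ x ⟶ y) (A : C) :
    (M.T.obj u).map ((M.μRegraded d).app A) ≫ (M.μRegraded d').app A =
      M.μ u v _ ≫ M.μ (u ⊗ v) w A ≫ (M.T.map ((α_ u v w).hom ≫ u ◁ d ≫ d')).app A := by
  calc (M.T.obj u).map ((M.μRegraded d).app A) ≫ (M.μRegraded d').app A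
      = (M.T.obj u).map (M.μ v w A) ≫ ((M.T.obj u).map ((M.T.map d).app A) ≫ M.μ u x A) ≫
          (M.T.map d').app A := by
        simp only [μRegraded, Functor.map_comp, Category.assoc]
    _ = ((M.T.obj u).map (M.μ v w A) ≫ M.μ u (v ⊗ w) A ≫ (M.T.map (α_ u v w).inv).app A) ≫
          (M.T.map ((α_ u v w).hom ≫ u ◁ d ≫ d')).app A := by
        rw [M.μ_natv]
        simp only [Category.assoc, M.T.map_comp_app, Iso.inv_hom_id_assoc]
    _ = M.μ u v _ ≫ M.μ (u ⊗ v) w A ≫ (M.T.map ((α_ u v w).hom ≫ u ◁ d ≫ d')).app A := by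
        rw [← M.μ_assoc, Category.assoc]

def toMonad (u : E) [MonObj u] : Monad C where
  toFunctor := M.T.obj u
  η := M.ηRegraded MonObj.one
  μ := M.μRegraded MonObj.mul
  left_unit A := by
    rw [M.ηRegraded_μRegraded, MonObj.one_mul, Iso.inv_hom_id, M.T.map_id]
    rfl
  right_unit A := by
    rw [M.map_ηRegraded_μRegraded, MonObj.mul_one, Iso.inv_hom_id, M.T.map_id]
    rfl
  assoc A := by
    rw [M.map_μRegraded_μRegraded, ← MonObj.mul_assoc, ← M.T.map_comp_app,
      ← reassoc_of% (M.μ_natu MonObj.mul u A)]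
    simp only [μRegraded, Category.assoc]

end GradedMonad

theorem graded_to_indexed_general {C E : Type*} [Category C] [Category E] [MonoidalCategory E]
    -- the codiagonals and the maps from the unit
    (del : ∀ u : E, u ⊗ u ⟶ u) (pt : ∀ u : E, 𝟙_ E ⟶ u)
    (del_assoc : ∀ u : E, del u ▷ u ≫ del u = (α_ u u u).hom ≫ u ◁ del u ≫ del u)
    (pt_left : ∀ u : E, (λ_ u).inv ≫ pt u ▷ u ≫ del u = 𝟙 u)
    (pt_right : ∀ u : E, (ρ_ u).inv ≫ u ◁ pt u ≫ del u = 𝟙 u)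
    -- the graded monad
    (T : E ⥤ (C ⥤ C)) (ε : 𝟭 C ⟶ T.obj (𝟙_ E))
    (gμ : ∀ (u v : E) (A : C), (T.obj u).obj ((T.obj v).obj A) ⟶ (T.obj (u ⊗ v)).obj A)
    -- graded monad laws
    (gμ_natA : ∀ (u v : E) {A B : C} (f : A ⟶ B),
      (T.obj u).map ((T.obj v).map f) ≫ gμ u v B = gμ u v A ≫ (T.obj (u ⊗ v)).map f)
    (gμ_natu : ∀ {u u' : E} (f : u ⟶ u') (v : E) (A : C),
      (T.map f).app ((T.obj v).obj A) ≫ gμ u' v A = gμ u v A ≫ (T.map (f ▷ v)).app A)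
    (gμ_natv : ∀ (u : E) {v v' : E} (g : v ⟶ v') (A : C),
      (T.obj u).map ((T.map g).app A) ≫ gμ u v' A = gμ u v A ≫ (T.map (u ◁ g)).app A)
    (gμ_lu : ∀ (v : E) (A : C),
      ε.app ((T.obj v).obj A) ≫ gμ (𝟙_ E) v A = (T.map (λ_ v).inv).app A)
    (gμ_ru : ∀ (v : E) (A : C),
      (T.obj v).map (ε.app A) ≫ gμ v (𝟙_ E) A = (T.map (ρ_ v).inv).app A)
    (gμ_assoc : ∀ (u v w : E) (A : C),
      gμ u v ((T.obj w).obj A) ≫ gμ (u ⊗ v) w A =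
        (T.obj u).map (gμ v w A) ≫ gμ u (v ⊗ w) A ≫ (T.map (α_ u v w).inv).app A) :
    -- for every grade u, the data (T_u, η̄_u, μ̄_u) is a monad on C
    ∀ u : E,
      -- naturality of the unit η̄_u
      (∀ {A B : C} (f : A ⟶ B),
        f ≫ (ε.app B ≫ (T.map (pt u)).app B) =
          (ε.app A ≫ (T.map (pt u)).app A) ≫ (T.obj u).map f) ∧
      -- naturality of the multiplication μ̄_u
      (∀ {A B : C} (f : A ⟶ B),
        (T.obj u).map ((T.obj u).map f) ≫ (gμ u u B ≫ (T.map (del u)).app B) =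
          (gμ u u A ≫ (T.map (del u)).app A) ≫ (T.obj u).map f) ∧
      -- left unit law
      (∀ A : C,
        (ε.app ((T.obj u).obj A) ≫ (T.map (pt u)).app ((T.obj u).obj A)) ≫
          (gμ u u A ≫ (T.map (del u)).app A) = 𝟙 ((T.obj u).obj A)) ∧
      -- right unit law
      (∀ A : C,
        (T.obj u).map (ε.app A ≫ (T.map (pt u)).app A) ≫
          (gμ u u A ≫ (T.map (del u)).app A) = 𝟙 ((T.obj u).obj A)) ∧
      -- associativity law
      (∀ A : C,
        (T.obj u).map (gμ u u A ≫ (T.map (del u)).app A) ≫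
          (gμ u u A ≫ (T.map (del u)).app A) =
        (gμ u u ((T.obj u).obj A) ≫ (T.map (del u)).app ((T.obj u).obj A)) ≫
          (gμ u u A ≫ (T.map (del u)).app A)) := by
  intro u
  let M : GradedMonad E C := ⟨T, ε, gμ, gμ_natA, gμ_natu, gμ_natv, gμ_lu, gμ_ru, gμ_assoc⟩
  let _ : MonObj u :=
    { one := pt u
      mul := del u
      one_mul := by rw [← Category.comp_id (λ_ u).hom, ← Iso.inv_comp_eq, pt_left]
      mul_one := by rw [← Category.comp_id (ρ_ u).hom, ← Iso.inv_comp_eq, pt_right]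
      mul_assoc := del_assoc u }
  let 𝕋 := M.toMonad u
  exact ⟨fun f => 𝕋.η.naturality f, fun f => 𝕋.μ.naturality f, 𝕋.left_unit, 𝕋.right_unit,
    𝕋.assoc⟩

/-- Let `E` be a monoidal category equipped with codiagonals `∇_u : u ⊗ u ⟶ u`
(natural and compatible with the coherence isomorphisms) and maps `!_u : I ⟶ u`.
Then every `E`-graded monad on `C` — a lax monoidal functor `E ⥤ [C,C]` given by a
functor `T : E ⥤ (C ⥤ C)`, a graded unit `ε : 𝟭 C ⟶ T_I` and graded multiplications
`gμ_{u,v,A} : T_u(T_v(A)) ⟶ T_{u⊗v}(A)` — induces an `E`-indexed monad with the same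
underlying functors: unit `η̄_{u,A} = T_{!_u}(η_A)` and multiplication
`μ̄_{u,A} = T_{∇_u}(A) ∘ μ_{u,u,A}`; each `(T_u, η̄_u, μ̄_u)` is a monad on `C`. -/
theorem graded_to_indexed {C E : Type*} [Category C] [Category E] [MonoidalCategory E]
    -- the codiagonals and the maps from the unit
    (del : ∀ u : E, u ⊗ u ⟶ u) (pt : ∀ u : E, 𝟙_ E ⟶ u)
    (del_nat : ∀ {u u' : E} (f : u ⟶ u'), (f ⊗ₘ f) ≫ del u' = del u ≫ f)
    (del_unit : del (𝟙_ E) = (λ_ (𝟙_ E)).hom)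
    (del_assoc : ∀ u : E, del u ▷ u ≫ del u = (α_ u u u).hom ≫ u ◁ del u ≫ del u)
    (pt_nat : ∀ {u u' : E} (f : u ⟶ u'), pt u ≫ f = pt u')
    (pt_left : ∀ u : E, (λ_ u).inv ≫ pt u ▷ u ≫ del u = 𝟙 u)
    (pt_right : ∀ u : E, (ρ_ u).inv ≫ u ◁ pt u ≫ del u = 𝟙 u)
    -- the graded monad
    (T : E ⥤ (C ⥤ C)) (ε : 𝟭 C ⟶ T.obj (𝟙_ E))
    (gμ : ∀ (u v : E) (A : C), (T.obj u).obj ((T.obj v).obj A) ⟶ (T.obj (u ⊗ v)).obj A)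
    -- graded monad laws
    (gμ_natA : ∀ (u v : E) {A B : C} (f : A ⟶ B),
      (T.obj u).map ((T.obj v).map f) ≫ gμ u v B = gμ u v A ≫ (T.obj (u ⊗ v)).map f)
    (gμ_natu : ∀ {u u' : E} (f : u ⟶ u') (v : E) (A : C),
      (T.map f).app ((T.obj v).obj A) ≫ gμ u' v A = gμ u v A ≫ (T.map (f ▷ v)).app A)
    (gμ_natv : ∀ (u : E) {v v' : E} (g : v ⟶ v') (A : C),
      (T.obj u).map ((T.map g).app A) ≫ gμ u v' A = gμ u v A ≫ (T.map (u ◁ g)).app A)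
    (gμ_lu : ∀ (v : E) (A : C),
      ε.app ((T.obj v).obj A) ≫ gμ (𝟙_ E) v A = (T.map (λ_ v).inv).app A)
    (gμ_ru : ∀ (v : E) (A : C),
      (T.obj v).map (ε.app A) ≫ gμ v (𝟙_ E) A = (T.map (ρ_ v).inv).app A)
    (gμ_assoc : ∀ (u v w : E) (A : C),
      gμ u v ((T.obj w).obj A) ≫ gμ (u ⊗ v) w A =
        (T.obj u).map (gμ v w A) ≫ gμ u (v ⊗ w) A ≫ (T.map (α_ u v w).inv).app A) :
    -- for every grade u, the data (T_u, η̄_u, μ̄_u) is a monad on C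
    ∀ u : E,
      -- naturality of the unit η̄_u
      (∀ {A B : C} (f : A ⟶ B),
        f ≫ (ε.app B ≫ (T.map (pt u)).app B) =
          (ε.app A ≫ (T.map (pt u)).app A) ≫ (T.obj u).map f) ∧
      -- naturality of the multiplication μ̄_u
      (∀ {A B : C} (f : A ⟶ B),
        (T.obj u).map ((T.obj u).map f) ≫ (gμ u u B ≫ (T.map (del u)).app B) =
          (gμ u u A ≫ (T.map (del u)).app A) ≫ (T.obj u).map f) ∧
      -- left unit law
      (∀ A : C,
        (ε.app ((T.obj u).obj A) ≫ (T.map (pt u)).app ((T.obj u).obj A)) ≫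
          (gμ u u A ≫ (T.map (del u)).app A) = 𝟙 ((T.obj u).obj A)) ∧
      -- right unit law
      (∀ A : C,
        (T.obj u).map (ε.app A ≫ (T.map (pt u)).app A) ≫
          (gμ u u A ≫ (T.map (del u)).app A) = 𝟙 ((T.obj u).obj A)) ∧
      -- associativity law
      (∀ A : C,
        (T.obj u).map (gμ u u A ≫ (T.map (del u)).app A) ≫
          (gμ u u A ≫ (T.map (del u)).app A) =
        (gμ u u ((T.obj u).obj A) ≫ (T.map (del u)).app ((T.obj u).obj A)) ≫
          (gμ u u A ≫ (T.map (del u)).app A)) :=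
  graded_to_indexed_general del pt del_assoc pt_left pt_right T ε gμ gμ_natA gμ_natu gμ_natv gμ_lu
    gμ_ru gμ_assoc
end
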